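/- arXiv:2407.20620 — 4 statements merged into one kernel-verified Lean document; each statement's English description precedes it below -/
import Mathlib

section
/- Let f : ℝⁿ → ℝ be continuously differentiable, m-strongly convex with m > 0, and have L-Lipschitz gradient, let g : ℝⁿ → ℝ be convex and lower semicontinuous, and let μ ∈ (0, 1/L). Then for every x, x' ∈ ℝⁿ: F_μ(x) − F(x') ≤ ⟨G_μ(x), x − x'⟩ − (m/2)‖x − x'‖² − (μ/2)‖G_μ(x)‖². -/
/-!
With `a = G_μ(x)`, `d = ∇f(x)` and `p = prox_{μg}(x - μd) = x - μa`, the infimum defining the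
Moreau envelope is attained at `p`, so `F_μ(x) = f(x) + g(p) + (μ/2)‖d - a‖² - (μ/2)‖d‖²`.
Strong convexity gives `f(x') ≥ f(x) + ⟪d, x' - x⟫ + (m/2)‖x' - x‖²`, and optimality of `p` makes
`a - d` a subgradient of `g` at `p`, so `g(x') ≥ g(p) + ⟪a - d, x' - p⟫`; adding these and
expanding the squares gives the bound. Both first-order inequalities come from one fact: along a
segment, the difference quotients of a convex function at `0⁺` are bounded by its increment over
the whole segment.
-/

open Set RealInnerProductSpace Filter Topology

section Convex

variable {E : Type*} [NormedAddCommGroup E] [NormedSpace ℝ E] {g : E → ℝ}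

lemma ConvexOn.eventually_slope_le_sub (hg : ConvexOn ℝ univ g) (p w : E) :
    ∀ᶠ t in 𝓝[>] (0 : ℝ), t⁻¹ * (g (p + t • w) - g p) ≤ g (p + w) - g p := by
  filter_upwards [Ioc_mem_nhdsGT one_pos] with t ⟨ht₀, ht₁⟩
  have hconv := hg.2 (mem_univ p) (mem_univ (p + w)) (sub_nonneg.2 ht₁) ht₀.le (by ring)
  rw [show (1 - t) • p + t • (p + w) = p + t • w by module, smul_eq_mul, smul_eq_mul] at hconv
  rw [inv_mul_le_iff₀ ht₀]
  linarith

lemma HasFDerivAt.tendsto_slope_zero_right {h : E → ℝ} {h' : E →L[ℝ] ℝ} {p : E}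
    (hh : HasFDerivAt h h' p) (w : E) :
    Tendsto (fun t : ℝ => t⁻¹ * (h (p + t • w) - h p)) (𝓝[>] 0) (𝓝 (h' w)) := by
  simpa using (hh.hasLineDerivAt w).tendsto_slope_zero_right

lemma ConvexOn.apply_le_sub_of_hasFDerivAt {g' : E →L[ℝ] ℝ} {p : E} (hg : ConvexOn ℝ univ g)
    (hd : HasFDerivAt g g' p) (w : E) : g' w ≤ g (p + w) - g p :=
  le_of_tendsto (hd.tendsto_slope_zero_right w) (hg.eventually_slope_le_sub p w)

lemma ConvexOn.neg_apply_le_sub_of_isMinOn_add {h : E → ℝ} {h' : E →L[ℝ] ℝ} {p : E}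
    (hg : ConvexOn ℝ univ g) (hh : HasFDerivAt h h' p) (hmin : IsMinOn (g + h) univ p) (w : E) :
    -h' w ≤ g (p + w) - g p := by
  refine le_of_tendsto (hh.tendsto_slope_zero_right w).neg ?_
  filter_upwards [hg.eventually_slope_le_sub p w, self_mem_nhdsWithin] with t hslope (ht : 0 < t)
  have hle : g p + h p ≤ g (p + t • w) + h (p + t • w) := hmin (mem_univ _)
  have : -(t⁻¹ * (h (p + t • w) - h p)) ≤ t⁻¹ * (g (p + t • w) - g p) := by
    rw [← mul_neg]
    exact mul_le_mul_of_nonneg_left (by linarith) (inv_nonneg.2 ht.le)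
  exact this.trans hslope

end Convex

section InnerProduct

variable {E : Type*} [NormedAddCommGroup E] [InnerProductSpace ℝ E]

lemma add_inner_gradient_add_le_of_convexOn_sub_sq [CompleteSpace E] {f : E → ℝ} {m : ℝ} {x : E}
    (hf : ConvexOn ℝ univ (fun x => f x - m / 2 * ‖x‖ ^ 2)) (hx : DifferentiableAt ℝ f x)
    (y : E) : f x + ⟪gradient f x, y - x⟫ + m / 2 * ‖y - x‖ ^ 2 ≤ f y := by
  have hd := hx.hasGradientAt.hasFDerivAt.sub
    ((hasStrictFDerivAt_norm_sq x).hasFDerivAt.const_mul (m / 2))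
  have key := hf.apply_le_sub_of_hasFDerivAt hd (y - x)
  have hy : ‖y‖ ^ 2 = ‖x‖ ^ 2 + 2 * ⟪x, y - x⟫ + ‖y - x‖ ^ 2 := by
    rw [← norm_add_sq_real, add_sub_cancel]
  simp only [sub_apply, smul_apply, InnerProductSpace.toDual_apply_apply, coe_innerSL_apply,
    nsmul_eq_mul, Nat.cast_ofNat, smul_eq_mul, add_sub_cancel] at key
  rw [hy] at key
  linarith

lemma ConvexOn.add_inner_le_of_isMinOn_prox {g : E → ℝ} {μ : ℝ} {v p : E}
    (hg : ConvexOn ℝ univ g) (hp : IsMinOn (fun z => g z + ‖z - v‖ ^ 2 / (2 * μ)) univ p)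
    (q : E) : g p + μ⁻¹ * ⟪v - p, q - p⟫ ≤ g q := by
  have hd : HasFDerivAt (fun z => ‖z - v‖ ^ 2 / (2 * μ))
      (((2 : ℝ) * μ)⁻¹ • 2 • innerSL ℝ (p - v)) p := by
    simpa [div_eq_mul_inv, mul_comm] using
      ((hasFDerivAt_id p).sub_const v).norm_sq.const_mul (2 * μ)⁻¹
  have key := hg.neg_apply_le_sub_of_isMinOn_add hd hp (q - p)
  simp only [smul_apply, coe_innerSL_apply, nsmul_eq_mul, Nat.cast_ofNat, smul_eq_mul,
    add_sub_cancel] at key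
  have hinner : μ⁻¹ * ⟪v - p, q - p⟫ = -((2 * μ)⁻¹ * (2 * ⟪p - v, q - p⟫)) := by
    rw [← neg_sub p v, inner_neg_left]
    ring
  linarith

end InnerProduct

theorem FB_envelope_upper_bound_general {n : ℕ}
    (f g F : EuclideanSpace ℝ (Fin n) → ℝ)
    (m L μ : ℝ)
    (hfC1 : ContDiff ℝ 1 f)
    (hfsc : ConvexOn ℝ univ (fun x => f x - m / 2 * ‖x‖ ^ 2))
    (hgconv : ConvexOn ℝ univ g)
    (hF : ∀ x, F x = f x + g x)
    (hμ : μ ∈ Ioo 0 (1 / L))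
    (proxg : EuclideanSpace ℝ (Fin n) → EuclideanSpace ℝ (Fin n))
    (hproxg : ∀ v, IsMinOn (fun z => g z + ‖z - v‖ ^ 2 / (2 * μ)) univ (proxg v))
    (G : EuclideanSpace ℝ (Fin n) → EuclideanSpace ℝ (Fin n))
    (hG : ∀ x, G x = μ⁻¹ • (x - proxg (x - μ • gradient f x)))
    (M : EuclideanSpace ℝ (Fin n) → ℝ)
    (hM : ∀ v, M v = ⨅ z : EuclideanSpace ℝ (Fin n), (g z + ‖z - v‖ ^ 2 / (2 * μ)))
    (Fμ : EuclideanSpace ℝ (Fin n) → ℝ)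
    (hFμ : ∀ x, Fμ x = f x + M (x - μ • gradient f x) - μ / 2 * ‖gradient f x‖ ^ 2) :
    ∀ x x' : EuclideanSpace ℝ (Fin n),
      Fμ x - F x' ≤ ⟪G x, x - x'⟫ - m / 2 * ‖x - x'‖ ^ 2 - μ / 2 * ‖G x‖ ^ 2 := by
  intro x x'
  have hμ₀ : μ ≠ 0 := hμ.1.ne'
  set d := gradient f x
  set a := G x with ha
  have hp : proxg (x - μ • d) = x - μ • a := by
    rw [ha, hG x, smul_smul, mul_inv_cancel₀ hμ₀, one_smul, sub_sub_cancel]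
  have hMv : M (x - μ • d) = g (x - μ • a) + μ / 2 * ‖d - a‖ ^ 2 := by
    rw [hM, ciInf_eq_of_forall_ge_of_forall_gt_exists_lt (isMinOn_univ_iff.mp (hproxg _))
      fun _ hw => ⟨_, hw⟩, hp, show x - μ • a - (x - μ • d) = μ • (d - a) by module, norm_smul,
      mul_pow, Real.norm_eq_abs, sq_abs]
    field_simp
  have hf := add_inner_gradient_add_le_of_convexOn_sub_sq hfsc
    (hfC1.differentiable one_ne_zero x) x'
  have hg : g (x - μ • a) + ⟪a - d, x' - x⟫ + μ * ⟪a - d, a⟫ ≤ g x' := by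
    have h := hgconv.add_inner_le_of_isMinOn_prox (hproxg (x - μ • d)) x'
    rwa [hp, show x - μ • d - (x - μ • a) = μ • (a - d) by module,
      show x' - (x - μ • a) = (x' - x) + μ • a by module, real_inner_smul_left, inner_add_right,
      real_inner_smul_right, ← mul_assoc, inv_mul_cancel₀ hμ₀, one_mul, ← add_assoc] at h
  rw [hFμ, hF, hMv, norm_sub_rev x x', ← neg_sub x' x, inner_neg_right, norm_sub_sq_real]
  rw [inner_sub_left, inner_sub_left, real_inner_self_eq_norm_sq] at hg
  linarith

/-- Lemma 3, inequality (a): upper bound on the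
forward–backward envelope in terms of the generalized gradient map for an
`m`-strongly convex `f` with `L`-Lipschitz gradient. -/
theorem FB_envelope_upper_bound {n : ℕ}
    (f g F : EuclideanSpace ℝ (Fin n) → ℝ)
    (m L μ : ℝ)
    (hm : 0 < m) (hL : 0 < L)
    (hfC1 : ContDiff ℝ 1 f)
    (hfsc : ConvexOn ℝ univ (fun x => f x - m / 2 * ‖x‖ ^ 2))
    (hfLip : ∀ x y, ‖gradient f x - gradient f y‖ ≤ L * ‖x - y‖)
    (hgconv : ConvexOn ℝ univ g) (hglsc : LowerSemicontinuous g)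
    (hF : ∀ x, F x = f x + g x)
    (hμ : μ ∈ Ioo 0 (1 / L))
    (proxg : EuclideanSpace ℝ (Fin n) → EuclideanSpace ℝ (Fin n))
    (hproxg : ∀ v, IsMinOn (fun z => g z + ‖z - v‖ ^ 2 / (2 * μ)) univ (proxg v))
    (G : EuclideanSpace ℝ (Fin n) → EuclideanSpace ℝ (Fin n))
    (hG : ∀ x, G x = μ⁻¹ • (x - proxg (x - μ • gradient f x)))
    (M : EuclideanSpace ℝ (Fin n) → ℝ)
    (hM : ∀ v, M v = ⨅ z : EuclideanSpace ℝ (Fin n), (g z + ‖z - v‖ ^ 2 / (2 * μ)))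
    (Fμ : EuclideanSpace ℝ (Fin n) → ℝ)
    (hFμ : ∀ x, Fμ x = f x + M (x - μ • gradient f x) - μ / 2 * ‖gradient f x‖ ^ 2) :
    ∀ x x' : EuclideanSpace ℝ (Fin n),
      Fμ x - F x' ≤ ⟪G x, x - x'⟫ - m / 2 * ‖x - x'‖ ^ 2 - μ / 2 * ‖G x‖ ^ 2 :=
  FB_envelope_upper_bound_general f g F m L μ hfC1 hfsc hgconv hF hμ proxg hproxg G hG M hM Fμ hFμ
end

section
/- Let f : ℝⁿ → ℝ be continuously differentiable, m-strongly convex with m > 0, and have L-Lipschitz gradient, let g : ℝⁿ → ℝ be convex and lower semicontinuous, and let μ ∈ (0, 1/L). Then for every x ∈ ℝⁿ and every minimizer x⋆ of F = f + g: F_μ(x) − F(x⋆) ≥ (m²(1 − μL)/(2L)) ‖x − x⋆‖². -/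
/-!
Completing the square writes `F_μ x` as the infimum over `z` of
`f x + ⟪∇f x, z - x⟫ + g z + ‖z - x‖² / (2μ)`. The descent lemma bounds the linearization below
by `f z - L/2 ‖z - x‖²`, so `F_μ x ≥ inf_z (F z + c ‖z - x‖²)` with `c = (1 - μL)/(2μ) > 0`.
Quadratic growth of the `m`-strongly convex `F` at its minimizer and the parallel-sum inequality
`a ‖u‖² + c ‖v‖² ≥ ac/(a + c) ‖u - v‖²` then give `F_μ x - F x⋆ ≥ (m/2)c/(m/2 + c) ‖x - x⋆‖²`.
This constant dominates `m²(1 - μL)/(2L)` because `m ≤ L` as soon as the space has two points.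
-/

open Set Filter Topology RealInnerProductSpace

section InnerProductSpace

variable {E : Type*} [NormedAddCommGroup E] [InnerProductSpace ℝ E]

noncomputable def moreauEnvelope (μ : ℝ) (g : E → ℝ) (v : E) : ℝ :=
  ⨅ z, (g z + ‖z - v‖ ^ 2 / (2 * μ))

lemma mul_div_add_mul_norm_sub_sq_le {a c : ℝ} (ha : 0 < a) (hc : 0 < c) (u v : E) :
    a * c / (a + c) * ‖u - v‖ ^ 2 ≤ a * ‖u‖ ^ 2 + c * ‖v‖ ^ 2 := by
  have h0 : 0 ≤ ‖a • u + c • v‖ ^ 2 := sq_nonneg _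
  rw [norm_add_sq_real, norm_smul, norm_smul, real_inner_smul_left, real_inner_smul_right,
    Real.norm_eq_abs, Real.norm_eq_abs, abs_of_pos ha, abs_of_pos hc] at h0
  rw [div_mul_eq_mul_div, div_le_iff₀ (by positivity), norm_sub_sq_real]
  nlinarith

lemma add_le_moreauEnvelope_sub_smul {g : E → ℝ} {μ b : ℝ} (hμ : 0 < μ) {x v : E}
    (h : ∀ z, b ≤ ⟪v, z - x⟫ + g z + ‖z - x‖ ^ 2 / (2 * μ)) :
    b + μ / 2 * ‖v‖ ^ 2 ≤ moreauEnvelope μ g (x - μ • v) := by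
  refine le_ciInf fun z => ?_
  have hsq : ‖z - (x - μ • v)‖ ^ 2 / (2 * μ)
      = ‖z - x‖ ^ 2 / (2 * μ) + ⟪v, z - x⟫ + μ / 2 * ‖v‖ ^ 2 := by
    rw [show z - (x - μ • v) = (z - x) + μ • v by abel, norm_add_sq_real, real_inner_smul_right,
      norm_smul, Real.norm_eq_abs, abs_of_pos hμ, real_inner_comm]
    field_simp
  linarith [h z]

lemma StrongConvexOn.add_le_of_isMinOn {s : Set E} {m : ℝ} {F : E → ℝ} {xs z : E}
    (hF : StrongConvexOn s m F) (hmin : IsMinOn F s xs) (hxs : xs ∈ s) (hz : z ∈ s) :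
    F xs + m / 2 * ‖z - xs‖ ^ 2 ≤ F z := by
  -- `F` need not be differentiable: compare along the segment from `xs` to `z` and let `t → 0`.
  have hstep : ∀ t ∈ Ioo (0 : ℝ) 1, (1 - t) * (m / 2 * ‖z - xs‖ ^ 2) ≤ F z - F xs := by
    intro t ⟨ht0, ht1⟩
    have hconv := hF.2 hxs hz (sub_nonneg.2 ht1.le) ht0.le (sub_add_cancel 1 t)
    have hmin' := isMinOn_iff.1 hmin _
      (hF.1 hxs hz (sub_nonneg.2 ht1.le) ht0.le (sub_add_cancel 1 t))
    simp only [smul_eq_mul, norm_sub_rev xs z] at hconv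
    nlinarith
  have hlim : Tendsto (fun t : ℝ => (1 - t) * (m / 2 * ‖z - xs‖ ^ 2)) (𝓝[>] 0)
      (𝓝 ((1 - 0) * (m / 2 * ‖z - xs‖ ^ 2))) :=
    ((continuous_const.sub continuous_id).mul continuous_const).continuousWithinAt.tendsto
  have := le_of_tendsto hlim (eventually_of_mem (Ioo_mem_nhdsGT one_pos) hstep)
  linarith

variable [CompleteSpace E]

noncomputable def fbEnvelope (f g : E → ℝ) (μ : ℝ) (x : E) : ℝ :=
  f x + moreauEnvelope μ g (x - μ • gradient f x) - μ / 2 * ‖gradient f x‖ ^ 2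

lemma le_add_inner_gradient_add_of_lipschitz_gradient {f : E → ℝ} {L : ℝ}
    (hf : Differentiable ℝ f) (hLip : ∀ x y, ‖gradient f x - gradient f y‖ ≤ L * ‖x - y‖)
    (x y : E) : f y ≤ f x + ⟪gradient f x, y - x⟫ + L / 2 * ‖y - x‖ ^ 2 := by
  set w := y - x
  let φ : ℝ → ℝ := fun t => f (x + t • w) - t * ⟪gradient f x, w⟫ - L / 2 * t ^ 2 * ‖w‖ ^ 2
  have hφ : ∀ t, HasDerivAt φ
      (⟪gradient f (x + t • w), w⟫ - ⟪gradient f x, w⟫ - L * t * ‖w‖ ^ 2) t := by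
    intro t
    have hline : HasDerivAt (fun t : ℝ => x + t • w) w t := by
      simpa using ((hasDerivAt_id t).smul_const w).const_add x
    have := (((hf _).hasFDerivAt.comp_hasDerivAt t hline).sub
      ((hasDerivAt_id t).mul_const ⟪gradient f x, w⟫)).sub
      (((hasDerivAt_pow 2 t).const_mul (L / 2)).mul_const (‖w‖ ^ 2))
    refine this.congr_deriv ?_
    simp only [inner_gradient_left]
    push_cast
    ring
  have hφ' : ∀ t ∈ interior (Ici (0 : ℝ)),
      ⟪gradient f (x + t • w), w⟫ - ⟪gradient f x, w⟫ - L * t * ‖w‖ ^ 2 ≤ 0 := by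
    intro t ht
    rw [interior_Ici] at ht
    have hcs := real_inner_le_norm (gradient f (x + t • w) - gradient f x) w
    have hL := hLip (x + t • w) x
    rw [add_sub_cancel_left, norm_smul, Real.norm_eq_abs, abs_of_pos ht] at hL
    rw [inner_sub_left] at hcs
    nlinarith [norm_nonneg w]
  have hanti := antitoneOn_of_hasDerivWithinAt_nonpos (convex_Ici 0)
    (fun t _ => (hφ t).continuousAt.continuousWithinAt)
    (fun t _ => (hφ t).hasDerivWithinAt) hφ'
  have := hanti self_mem_Ici (mem_Ici.2 zero_le_one) zero_le_one
  simp only [φ, zero_smul, add_zero, one_smul, w, add_sub_cancel] at this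
  linarith

lemma StrongConvexOn.le_of_lipschitz_gradient {f : E → ℝ} {m L : ℝ}
    (hsc : StrongConvexOn univ m f) (hf : Differentiable ℝ f)
    (hLip : ∀ x y, ‖gradient f x - gradient f y‖ ≤ L * ‖x - y‖) {x y : E} (hxy : x ≠ y) :
    m ≤ L := by
  -- At the midpoint `p`, strong convexity bounds `(f x + f y)/2 - f p` below by `m/8 ‖x - y‖²`,
  -- the descent lemma from `p` bounds it above by `L/8 ‖x - y‖²`.
  set p : E := (1 / 2 : ℝ) • x + (1 / 2 : ℝ) • y
  have hmid := hsc.2 (mem_univ x) (mem_univ y) (by norm_num : (0 : ℝ) ≤ 1 / 2)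
    (by norm_num : (0 : ℝ) ≤ 1 / 2) (by norm_num)
  have hx := le_add_inner_gradient_add_of_lipschitz_gradient hf hLip p x
  have hy := le_add_inner_gradient_add_of_lipschitz_gradient hf hLip p y
  rw [show x - p = (1 / 2 : ℝ) • (x - y) by module, norm_smul, inner_smul_right] at hx
  rw [show y - p = -(1 / 2 : ℝ) • (x - y) by module, norm_smul, inner_smul_right] at hy
  simp only [smul_eq_mul, Real.norm_eq_abs] at hmid hx hy
  norm_num at hx hy
  have hd : 0 < ‖x - y‖ ^ 2 := by have := sub_ne_zero.2 hxy; positivity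
  have : m * ‖x - y‖ ^ 2 ≤ L * ‖x - y‖ ^ 2 := by linarith
  exact le_of_mul_le_mul_right this hd

lemma add_le_fbEnvelope {f g : E → ℝ} {m L μ : ℝ} (hm : 0 < m) (hμ : 0 < μ) (hμL : μ * L < 1)
    (hf : Differentiable ℝ f) (hLip : ∀ x y, ‖gradient f x - gradient f y‖ ≤ L * ‖x - y‖)
    (hsc : StrongConvexOn univ m (f + g)) {xs : E} (hmin : IsMinOn (f + g) univ xs) (x : E) :
    (f + g) xs + m / 2 * ((1 - μ * L) / (2 * μ)) / (m / 2 + (1 - μ * L) / (2 * μ)) * ‖x - xs‖ ^ 2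
      ≤ fbEnvelope f g μ x := by
  set c := (1 - μ * L) / (2 * μ) with hc
  have hc0 : 0 < c := div_pos (sub_pos.2 hμL) (by positivity)
  suffices hmodel : ∀ z, (f + g) xs + m / 2 * c / (m / 2 + c) * ‖x - xs‖ ^ 2 - f x
      ≤ ⟪gradient f x, z - x⟫ + g z + ‖z - x‖ ^ 2 / (2 * μ) by
    rw [fbEnvelope]
    linarith [add_le_moreauEnvelope_sub_smul hμ hmodel]
  intro z
  have hgrowth := hsc.add_le_of_isMinOn hmin (mem_univ xs) (mem_univ z)
  have hdescent := le_add_inner_gradient_add_of_lipschitz_gradient hf hLip x z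
  have hyoung := mul_div_add_mul_norm_sub_sq_le (half_pos hm) hc0 (z - xs) (z - x)
  rw [sub_sub_sub_cancel_left] at hyoung
  have hsplit : ‖z - x‖ ^ 2 / (2 * μ) = L / 2 * ‖z - x‖ ^ 2 + c * ‖z - x‖ ^ 2 := by
    rw [hc]
    field_simp
    ring
  simp only [Pi.add_apply] at hgrowth ⊢
  linarith

end InnerProductSpace

lemma sq_mul_div_le_parallel_sum {m L μ : ℝ} (hm : 0 < m) (hmL : m ≤ L) (hμ : 0 < μ)
    (hμL : μ * L < 1) :
    m ^ 2 * (1 - μ * L) / (2 * L)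
      ≤ m / 2 * ((1 - μ * L) / (2 * μ)) / (m / 2 + (1 - μ * L) / (2 * μ)) := by
  have hL : 0 < L := hm.trans_le hmL
  have hs : 0 < 1 - μ * L := sub_pos.2 hμL
  field_simp
  nlinarith [mul_nonneg (sub_nonneg.2 hmL) (by positivity : (0 : ℝ) ≤ 1 + μ * m)]

theorem FB_envelope_lower_bound_general {n : ℕ}
    (f g F : EuclideanSpace ℝ (Fin n) → ℝ)
    (m L μ : ℝ)
    (hm : 0 < m) (hL : 0 < L)
    (hfC1 : ContDiff ℝ 1 f)
    (hfsc : ConvexOn ℝ univ (fun x => f x - m / 2 * ‖x‖ ^ 2))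
    (hfLip : ∀ x y, ‖gradient f x - gradient f y‖ ≤ L * ‖x - y‖)
    (hgconv : ConvexOn ℝ univ g)
    (hF : ∀ x, F x = f x + g x)
    (hμ : μ ∈ Ioo 0 (1 / L))
    (M : EuclideanSpace ℝ (Fin n) → ℝ)
    (hM : ∀ v, M v = ⨅ z : EuclideanSpace ℝ (Fin n), (g z + ‖z - v‖ ^ 2 / (2 * μ)))
    (Fμ : EuclideanSpace ℝ (Fin n) → ℝ)
    (hFμ : ∀ x, Fμ x = f x + M (x - μ • gradient f x) - μ / 2 * ‖gradient f x‖ ^ 2) :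
    ∀ x : EuclideanSpace ℝ (Fin n), ∀ xs, IsMinOn F univ xs →
      m ^ 2 * (1 - μ * L) / (2 * L) * ‖x - xs‖ ^ 2 ≤ Fμ x - F xs := by
  intro x xs hmin
  obtain rfl : F = f + g := funext hF
  obtain ⟨hμ0, hμL⟩ := hμ
  rw [lt_div_iff₀ hL] at hμL
  have hf : Differentiable ℝ f := hfC1.differentiable one_ne_zero
  have hfsc' : StrongConvexOn univ m f := strongConvexOn_iff_convex.2 hfsc
  have hFsc : StrongConvexOn univ m (f + g) := by
    have := UniformConvexOn.add hfsc' (uniformConvexOn_zero.2 hgconv)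
    rwa [add_zero] at this
  have hgap := add_le_fbEnvelope hm hμ0 hμL hf hfLip hFsc hmin x
  have hFμx : Fμ x = fbEnvelope f g μ x := by rw [hFμ, hM]; rfl
  rw [hFμx]
  rcases eq_or_ne x xs with rfl | hne
  · simp only [sub_self, norm_zero] at hgap ⊢
    linarith
  · have hmL := hfsc'.le_of_lipschitz_gradient hf hfLip hne
    have hrate := sq_mul_div_le_parallel_sum hm hmL hμ0 hμL
    linarith [mul_le_mul_of_nonneg_right hrate (sq_nonneg ‖x - xs‖)]

/-- Lemma 3, inequality (b): lower bound on the gap between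
the forward–backward envelope and the optimal value for an `m`-strongly convex
`f` with `L`-Lipschitz gradient. -/
theorem FB_envelope_lower_bound {n : ℕ}
    (f g F : EuclideanSpace ℝ (Fin n) → ℝ)
    (m L μ : ℝ)
    (hm : 0 < m) (hL : 0 < L)
    (hfC1 : ContDiff ℝ 1 f)
    (hfsc : ConvexOn ℝ univ (fun x => f x - m / 2 * ‖x‖ ^ 2))
    (hfLip : ∀ x y, ‖gradient f x - gradient f y‖ ≤ L * ‖x - y‖)
    (hgconv : ConvexOn ℝ univ g) (hglsc : LowerSemicontinuous g)
    (hF : ∀ x, F x = f x + g x)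
    (hμ : μ ∈ Ioo 0 (1 / L))
    (M : EuclideanSpace ℝ (Fin n) → ℝ)
    (hM : ∀ v, M v = ⨅ z : EuclideanSpace ℝ (Fin n), (g z + ‖z - v‖ ^ 2 / (2 * μ)))
    (Fμ : EuclideanSpace ℝ (Fin n) → ℝ)
    (hFμ : ∀ x, Fμ x = f x + M (x - μ • gradient f x) - μ / 2 * ‖gradient f x‖ ^ 2) :
    ∀ x : EuclideanSpace ℝ (Fin n), ∀ xs, IsMinOn F univ xs →
      m ^ 2 * (1 - μ * L) / (2 * L) * ‖x - xs‖ ^ 2 ≤ Fμ x - F xs :=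
  FB_envelope_lower_bound_general f g F m L μ hm hL hfC1 hfsc hfLip hgconv hF hμ M hM Fμ hFμ
end

section
/- Let 0 < m ≤ L be real numbers with L/m ≥ 2, let k ≥ 2 be a real number, and set μ = 1/(kL). Then the forward–backward envelope condition number satisfies (2(1 − μm)/μ) / min{(1 − μm)m, (1 − μL)L} ≤ 2k(L/m), and the Douglas–Rachford envelope condition number satisfies ((1 − μm)/(μ(1 + μm)²)) / min{ (1 − μm)m/(1 + μm)², (1 − μL)L/(1 + μL)² } ≤ 2k(L/m). -/
/-!
Write `a = μm` and `b = μL`, so that `2kL/m = 2/a`. The forward–backward envelope has condition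
number exactly `2/a`: the minimum is attained at `m`, because `t ↦ t(1 - t)` increases on `[0, 1/2]`.
For the Douglas–Rachford envelope, with `φ t = t(1 - t)/(1 + t)²` the condition number is
`max 1 (φ a / φ b) / a`, and `φ a ≤ 2 φ b` as soon as `2a ≤ b ≤ 1/2`.
-/

lemma mul_one_sub_le_mul_one_sub {a b : ℝ} (hab : a ≤ b) (hsum : a + b ≤ 1) :
    a * (1 - a) ≤ b * (1 - b) := by
  nlinarith [mul_nonneg (sub_nonneg.2 hab) (by linarith : 0 ≤ 1 - a - b)]

/-- The difference of the two sides is `b(1-b)(1+a)² + (b-a)(1-a-b-3ab)`, and the last factor is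
at least `-1/8`. -/
lemma mul_one_sub_mul_one_add_sq_le_two_mul {a b : ℝ} (ha : 0 ≤ a) (hab : 2 * a ≤ b)
    (hb : b ≤ 1 / 2) :
    a * (1 - a) * (1 + b) ^ 2 ≤ 2 * (b * (1 - b) * (1 + a) ^ 2) := by
  have hfactor : -(1 / 8) ≤ 1 - a - b - 3 * a * b := by nlinarith
  have hlead : b / 2 ≤ b * (1 - b) * (1 + a) ^ 2 := by
    have : 1 / 2 ≤ (1 - b) * (1 + a) ^ 2 := by nlinarith
    nlinarith
  nlinarith [mul_le_mul_of_nonneg_left hfactor (by linarith : 0 ≤ b - a)]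

theorem forwardBackward_condition_number_eq {m L μ : ℝ} (hμ : 0 < μ) (hm : 0 < m) (hmL : m ≤ L)
    (hμmL : μ * (m + L) ≤ 1) :
    (2 * (1 - μ * m) / μ) / min ((1 - μ * m) * m) ((1 - μ * L) * L) = 2 / (μ * m) := by
  have hμm : μ * m ≠ 1 := by nlinarith
  have hmin : (1 - μ * m) * m ≤ (1 - μ * L) * L := by
    have h := mul_one_sub_le_mul_one_sub (a := μ * m) (b := μ * L)
      (mul_le_mul_of_nonneg_left hmL hμ.le) (by linarith)
    refine le_of_mul_le_mul_left ?_ hμ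
    linear_combination h
  rw [min_eq_left hmin]
  field_simp [sub_ne_zero.2 hμm.symm]

theorem douglasRachford_condition_number_le {m L μ : ℝ} (hμ : 0 < μ) (hm : 0 < m)
    (hmL : 2 * m ≤ L) (hμL : μ * L ≤ 1 / 2) :
    ((1 - μ * m) / (μ * (1 + μ * m) ^ 2)) /
        min ((1 - μ * m) * m / (1 + μ * m) ^ 2) ((1 - μ * L) * L / (1 + μ * L) ^ 2) ≤
      2 / (μ * m) := by
  have hμm : 0 < μ * m := by positivity
  have hμmL : 2 * (μ * m) ≤ μ * L := by nlinarith
  have h1m : 0 < 1 - μ * m := by linarith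
  have h1L : 0 < 1 - μ * L := by linarith
  have hL : 0 < L := by linarith
  rw [div_le_iff₀ (lt_min (by positivity) (by positivity)), mul_min_of_nonneg _ _ (by positivity)]
  refine le_min ?_ ?_
  · rw [div_le_iff₀ (by positivity)]
    field_simp
    nlinarith
  · have key := mul_one_sub_mul_one_add_sq_le_two_mul hμm.le hμmL hμL
    rw [div_le_iff₀ (by positivity)]
    field_simp
    nlinarith [mul_le_mul_of_nonneg_left key hμ.le]

theorem envelope_condition_number_bound_general (m L k μ : ℝ)
    (hm : 0 < m) (hκ : 2 ≤ L / m) (hk : 2 ≤ k)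
    (hμ : μ = 1 / (k * L)) :
    (2 * (1 - μ * m) / μ) / min ((1 - μ * m) * m) ((1 - μ * L) * L) ≤
        2 * k * (L / m) ∧
    ((1 - μ * m) / (μ * (1 + μ * m) ^ 2)) /
        min ((1 - μ * m) * m / (1 + μ * m) ^ 2)
            ((1 - μ * L) * L / (1 + μ * L) ^ 2) ≤
        2 * k * (L / m) := by
  have h2m : 2 * m ≤ L := (le_div_iff₀ hm).1 hκ
  have hL : 0 < L := by linarith
  have hk0 : 0 < k := by linarith
  have hμ0 : 0 < μ := by rw [hμ]; positivity
  have hμL : μ * L ≤ 1 / 2 := by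
    rw [hμ, one_div_mul_eq_div, div_le_iff₀ (by positivity)]
    nlinarith
  have hbound : 2 * k * (L / m) = 2 / (μ * m) := by
    rw [hμ]; field_simp
  rw [hbound]
  exact ⟨(forwardBackward_condition_number_eq hμ0 hm (by linarith) (by nlinarith)).le,
    douglasRachford_condition_number_le hμ0 hm h2m hμL⟩

/-- for `μ = 1/(kL)` with `k ≥ 2` and condition number
`κ = L/m ≥ 2`, the condition numbers of the forward–backward and
Douglas–Rachford envelopes are both bounded by `2kκ`. -/
theorem envelope_condition_number_bound (m L k μ : ℝ)
    (hm : 0 < m) (hmL : m ≤ L) (hκ : 2 ≤ L / m) (hk : 2 ≤ k)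
    (hμ : μ = 1 / (k * L)) :
    (2 * (1 - μ * m) / μ) / min ((1 - μ * m) * m) ((1 - μ * L) * L) ≤
        2 * k * (L / m) ∧
    ((1 - μ * m) / (μ * (1 + μ * m) ^ 2)) /
        min ((1 - μ * m) * m / (1 + μ * m) ^ 2)
            ((1 - μ * L) * L / (1 + μ * L) ^ 2) ≤
        2 * k * (L / m) :=
  envelope_condition_number_bound_general m L k μ hm hκ hk hμ
end

section
/- Let f : ℝⁿ → ℝ be continuously differentiable, m-strongly convex with m > 0, and have L-Lipschitz gradient, let g : ℝⁿ → ℝ be convex and lower semicontinuous, let μ = 1/(2L), and let α > 0. Then there exists a constant c > 0 such that for every continuously differentiable x : [0,∞) → ℝⁿ satisfying ẋ(t) = −α G_μ(x(t)) for all t ≥ 0, and the unique minimizer x⋆ of F = f + g: ‖x(t) − x⋆‖ ≤ c e^{−α m t} ‖x(0) − x⋆‖ for all t ≥ 0. -/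
/-!
Along the flow, `‖x t - x⋆‖²` decays at rate `2αm` as soon as the forward–backward residual is
strongly monotone around the minimizer: `m ‖z - x⋆‖² ≤ ⟪G z, z - x⋆⟫`. Since `G z = μ⁻¹ (z - T z)`
with `T z = prox_{μg} (z - μ ∇f z)`, this follows from `T x⋆ = x⋆` and `T` being a
`(1 - μm)`-contraction. The proximal map is nonexpansive, and for `μ = 1/(2L)` the forward step is
`μ (ℓ • id - ∇h)` with `h = f - (m/2)‖·‖²` convex and `ℓ = 2L - m`; cocoercivity of `∇h`
(Baillon–Haddad) makes it a contraction of ratio `μℓ = 1 - μm`. Grönwall's inequality for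
`‖x t - x⋆‖²` then gives the bound with `c = 1`.
-/

open Set RealInnerProductSpace Filter Topology

lemma nonneg_of_forall_mem_Ioo_nonneg_add_mul {a b : ℝ}
    (h : ∀ t ∈ Ioo (0 : ℝ) 1, 0 ≤ a + t * b) : 0 ≤ a := by
  have hlim : Tendsto (fun t : ℝ => a + t * b) (𝓝[>] 0) (𝓝 a) :=
    ((Continuous.tendsto' (by fun_prop) 0 a (by simp)).mono_left nhdsWithin_le_nhds)
  exact ge_of_tendsto hlim (eventually_of_mem (Ioo_mem_nhdsGT one_pos) h)

variable {E : Type*} [NormedAddCommGroup E] [InnerProductSpace ℝ E]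

def IsProxPoint (g : E → ℝ) (μ : ℝ) (v p : E) : Prop :=
  IsMinOn (fun z => g z + ‖z - v‖ ^ 2 / (2 * μ)) univ p

namespace IsProxPoint

variable {g : E → ℝ} {μ : ℝ}

lemma inner_sub_le (hg : ConvexOn ℝ univ g) (hμ : 0 < μ) {v p : E} (hp : IsProxPoint g μ v p)
    (z : E) : ⟪v - p, z - p⟫ ≤ μ * (g z - g p) := by
  suffices h : 0 ≤ 2 * (μ * (g z - g p) - ⟪v - p, z - p⟫) by linarith
  refine nonneg_of_forall_mem_Ioo_nonneg_add_mul (b := ‖z - p‖ ^ 2) fun t ht => ?_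
  have hmin : g p + ‖p - v‖ ^ 2 / (2 * μ) ≤
      g (p + t • (z - p)) + ‖p + t • (z - p) - v‖ ^ 2 / (2 * μ) := hp (mem_univ _)
  have hconv : g (p + t • (z - p)) ≤ (1 - t) * g p + t * g z := by
    have := hg.2 (mem_univ p) (mem_univ z) (by linarith [ht.2]) ht.1.le (sub_add_cancel 1 t)
    rwa [smul_eq_mul, smul_eq_mul, show (1 - t) • p + t • z = p + t • (z - p) by module] at this
  have hsq : ‖p + t • (z - p) - v‖ ^ 2 =
      ‖p - v‖ ^ 2 - 2 * t * ⟪v - p, z - p⟫ + t ^ 2 * ‖z - p‖ ^ 2 := by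
    rw [add_sub_right_comm, norm_add_sq_real, real_inner_smul_right, norm_smul,
      Real.norm_of_nonneg ht.1.le, ← neg_sub v p, inner_neg_left]
    ring
  rw [hsq] at hmin
  have : 0 ≤ t * (2 * (μ * (g z - g p) - ⟪v - p, z - p⟫) + t * ‖z - p‖ ^ 2) := by
    field_simp at hmin
    nlinarith
  exact nonneg_of_mul_nonneg_right (by linarith) ht.1

lemma norm_sub_le (hg : ConvexOn ℝ univ g) (hμ : 0 < μ) {u v p q : E}
    (hp : IsProxPoint g μ u p) (hq : IsProxPoint g μ v q) : ‖p - q‖ ≤ ‖u - v‖ := by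
  have hfirm : ‖p - q‖ ^ 2 ≤ ⟪u - v, p - q⟫ := by
    have hpq := hp.inner_sub_le hg hμ q
    have hqp := hq.inner_sub_le hg hμ p
    have : ⟪u - v, p - q⟫ - ‖p - q‖ ^ 2 = -⟪u - p, q - p⟫ - ⟪v - q, p - q⟫ := by
      rw [← real_inner_self_eq_norm_sq, ← inner_sub_left, ← neg_sub p q, inner_neg_right,
        neg_neg, ← inner_sub_left]
      congr 1; abel
    linarith
  nlinarith [real_inner_le_norm (u - v) (p - q), norm_nonneg (u - v), norm_nonneg (p - q)]

end IsProxPoint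

lemma norm_smul_sub_le_of_sq_norm_le_inner {ℓ : ℝ} (hℓ : 0 ≤ ℓ) {a e : E}
    (h : ‖a‖ ^ 2 ≤ ℓ * ⟪a, e⟫) : ‖ℓ • e - a‖ ≤ ℓ * ‖e‖ := by
  have hsq : ‖ℓ • e - a‖ ^ 2 = ℓ ^ 2 * ‖e‖ ^ 2 - 2 * (ℓ * ⟪a, e⟫) + ‖a‖ ^ 2 := by
    rw [norm_sub_sq_real, real_inner_smul_left, norm_smul, Real.norm_of_nonneg hℓ,
      real_inner_comm]
    ring
  refine (pow_le_pow_iff_left₀ (norm_nonneg _) (by positivity) two_ne_zero).1 ?_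
  nlinarith [sq_nonneg ‖a‖]

lemma sub_mul_sq_le_inner_sub_of_norm_sub_le {κ : ℝ} {z w p : E}
    (hp : ‖p - w‖ ≤ κ * ‖z - w‖) : (1 - κ) * ‖z - w‖ ^ 2 ≤ ⟪z - p, z - w⟫ := by
  have hsplit : ⟪z - p, z - w⟫ = ‖z - w‖ ^ 2 - ⟪p - w, z - w⟫ := by
    rw [← real_inner_self_eq_norm_sq, ← inner_sub_left, sub_sub_sub_cancel_right]
  have hcs := real_inner_le_norm (p - w) (z - w)
  nlinarith [norm_nonneg (z - w)]

lemma norm_sub_le_exp_mul_of_inner_deriv_le {x v : ℝ → E} {xs : E} {κ : ℝ}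
    (hx : ∀ t ∈ Ici (0 : ℝ), HasDerivWithinAt x (v t) (Ici 0) t)
    (hdiss : ∀ t ∈ Ici (0 : ℝ), ⟪v t, x t - xs⟫ ≤ -κ * ‖x t - xs‖ ^ 2)
    {t : ℝ} (ht : t ∈ Ici 0) : ‖x t - xs‖ ≤ Real.exp (-κ * t) * ‖x 0 - xs‖ := by
  have hd : ∀ s ∈ Ici (0 : ℝ), HasDerivWithinAt (fun s => ‖x s - xs‖ ^ 2)
      (2 * ⟪x s - xs, v s⟫) (Ici 0) s := fun s hs => ((hx s hs).sub_const xs).norm_sq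
  have hsq : ‖x t - xs‖ ^ 2 ≤ ‖x 0 - xs‖ ^ 2 * Real.exp (-2 * κ * t) := by
    have := le_gronwallBound_of_liminf_deriv_right_le (δ := ‖x 0 - xs‖ ^ 2) (K := -2 * κ)
      (ε := 0)
      (fun s hs => (hd s hs.1).continuousWithinAt.mono Icc_subset_Ici_self)
      (fun s hs r hr => ((hd s hs.1).mono (Ici_subset_Ici.2 hs.1)).liminf_right_slope_le hr)
      le_rfl (fun s hs => by rw [real_inner_comm]; linarith [hdiss s hs.1]) t ⟨ht, le_rfl⟩
    rwa [gronwallBound_ε0, sub_zero] at this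
  have hexp : Real.exp (-2 * κ * t) = Real.exp (-κ * t) ^ 2 := by
    rw [← Real.exp_nat_mul]; ring_nf
  rw [hexp, ← mul_pow, mul_comm] at hsq
  exact (pow_le_pow_iff_left₀ (norm_nonneg _) (by positivity) two_ne_zero).1 hsq

variable [CompleteSpace E]

lemma HasGradientAt.hasDerivAt_lineMap {φ : E → ℝ} {x y : E} {t : ℝ} {g : E}
    (h : HasGradientAt φ g (AffineMap.lineMap x y t)) :
    HasDerivAt (φ ∘ AffineMap.lineMap x y) ⟪g, y - x⟫ t := by
  simpa using h.hasFDerivAt.comp_hasDerivAt t AffineMap.hasDerivAt_lineMap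

lemma HasGradientAt.sub_mul_sq_norm {φ : E → ℝ} {g x : E} (h : HasGradientAt φ g x) (m : ℝ) :
    HasGradientAt (fun z => φ z - m / 2 * ‖z‖ ^ 2) (g - m • x) x := by
  rw [hasGradientAt_iff_hasFDerivAt] at h ⊢
  refine (h.sub ((hasStrictFDerivAt_norm_sq x).hasFDerivAt.const_mul (m / 2))).congr_fderiv ?_
  ext w
  simp only [sub_apply, smul_apply, InnerProductSpace.toDual_apply_apply, innerSL_apply_apply,
    inner_sub_left, real_inner_smul_left, smul_eq_mul, nsmul_eq_mul]
  ring

lemma ConvexOn.add_inner_le_of_hasGradientAt {φ : E → ℝ} {x g : E}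
    (hφ : ConvexOn ℝ univ φ) (hg : HasGradientAt φ g x) (y : E) :
    φ x + ⟪g, y - x⟫ ≤ φ y := by
  have hline : ConvexOn ℝ univ (φ ∘ AffineMap.lineMap x y) :=
    hφ.comp_affineMap (AffineMap.lineMap x y)
  have := hline.le_slope_of_hasDerivAt (mem_univ 0) (mem_univ 1) one_pos
    (HasGradientAt.hasDerivAt_lineMap (by simpa using hg))
  simp only [slope_def_field, Function.comp_apply, AffineMap.lineMap_apply_one,
    AffineMap.lineMap_apply_zero, sub_zero, div_one] at this
  linarith

lemma ConvexOn.inner_sub_nonneg_of_hasGradientAt {φ : E → ℝ} {x y gx gy : E}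
    (hφ : ConvexOn ℝ univ φ) (hx : HasGradientAt φ gx x) (hy : HasGradientAt φ gy y) :
    0 ≤ ⟪gx - gy, x - y⟫ := by
  have hxy := hφ.add_inner_le_of_hasGradientAt hx y
  have hyx := hφ.add_inner_le_of_hasGradientAt hy x
  rw [← neg_sub x y, inner_neg_right] at hxy
  rw [inner_sub_left]
  linarith

lemma le_add_inner_add_sq_of_lipschitz_gradient {φ : E → ℝ} {φ' : E → E} {L : ℝ}
    (hφ : ∀ z, HasGradientAt φ (φ' z) z)
    (hLip : ∀ x y, ‖φ' x - φ' y‖ ≤ L * ‖x - y‖) (x y : E) :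
    φ y ≤ φ x + ⟪φ' x, y - x⟫ + L / 2 * ‖y - x‖ ^ 2 := by
  set u : ℝ → ℝ := fun s => φ (AffineMap.lineMap x y s) - L / 2 * s ^ 2 * ‖y - x‖ ^ 2
  have hu : ∀ s,
      HasDerivAt u (⟪φ' (AffineMap.lineMap x y s), y - x⟫ - L * s * ‖y - x‖ ^ 2) s := by
    intro s
    refine ((HasGradientAt.hasDerivAt_lineMap (x := x) (y := y) (hφ _)).sub
      (((hasDerivAt_pow 2 s).const_mul (L / 2)).mul_const (‖y - x‖ ^ 2))).congr_deriv ?_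
    simp only [Nat.cast_ofNat, pow_one, Nat.add_one_sub_one]; ring
  obtain ⟨s, hs, hslope⟩ := exists_hasDerivAt_eq_slope u _ one_pos
    (fun s _ => (hu s).continuousAt.continuousWithinAt) (fun s _ => hu s)
  have hstep : ⟪φ' (AffineMap.lineMap x y s) - φ' x, y - x⟫ ≤ L * s * ‖y - x‖ ^ 2 :=
    calc _ ≤ ‖φ' (AffineMap.lineMap x y s) - φ' x‖ * ‖y - x‖ := real_inner_le_norm _ _
      _ ≤ L * ‖AffineMap.lineMap x y s - x‖ * ‖y - x‖ := by gcongr; exact hLip _ _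
      _ = L * s * ‖y - x‖ ^ 2 := by
        rw [AffineMap.lineMap_apply_module', add_sub_cancel_right, norm_smul,
          Real.norm_of_nonneg hs.1.le]; ring
  simp only [u, AffineMap.lineMap_apply_one, AffineMap.lineMap_apply_zero, one_pow, mul_one,
    zero_pow two_ne_zero, mul_zero, zero_mul, sub_zero, div_one, inner_sub_left] at hslope hstep
  linarith

section Cocoercive

variable {φ : E → ℝ} {φ' : E → E} {ℓ : ℝ}

lemma ConvexOn.add_inner_add_sq_norm_sub_le (hℓ : 0 < ℓ) (hφ : ConvexOn ℝ univ φ)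
    (hub : ∀ a b, φ b ≤ φ a + ⟪φ' a, b - a⟫ + ℓ / 2 * ‖b - a‖ ^ 2) {x : E}
    (hx : HasGradientAt φ (φ' x) x) (y : E) :
    φ x + ⟪φ' x, y - x⟫ + ‖φ' y - φ' x‖ ^ 2 / (2 * ℓ) ≤ φ y := by
  set Δ := φ' y - φ' x
  -- `y - ℓ⁻¹ • Δ` minimizes the quadratic upper bound at `y`
  have hlow := hφ.add_inner_le_of_hasGradientAt hx (y - ℓ⁻¹ • Δ)
  have hup := hub y (y - ℓ⁻¹ • Δ)
  have hΔ : ⟪φ' y, Δ⟫ - ⟪φ' x, Δ⟫ = ‖Δ‖ ^ 2 := by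
    rw [← inner_sub_left, real_inner_self_eq_norm_sq]
  rw [sub_sub_cancel_left, norm_neg, norm_smul, inner_neg_right, real_inner_smul_right,
    Real.norm_of_nonneg (inv_nonneg.2 hℓ.le)] at hup
  rw [sub_right_comm, inner_sub_right, real_inner_smul_right] at hlow
  have hquad : ℓ / 2 * (ℓ⁻¹ * ‖Δ‖) ^ 2 = ‖Δ‖ ^ 2 / (2 * ℓ) := by field_simp
  rw [hquad] at hup
  have hlin : ℓ⁻¹ * ⟪φ' y, Δ⟫ - ℓ⁻¹ * ⟪φ' x, Δ⟫ = 2 * (‖Δ‖ ^ 2 / (2 * ℓ)) := by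
    rw [← mul_sub, hΔ]; field_simp
  linarith

lemma ConvexOn.sq_norm_sub_le_inner (hℓ : 0 < ℓ) (hφ : ConvexOn ℝ univ φ)
    (hgrad : ∀ z, HasGradientAt φ (φ' z) z)
    (hub : ∀ a b, φ b ≤ φ a + ⟪φ' a, b - a⟫ + ℓ / 2 * ‖b - a‖ ^ 2) (x y : E) :
    ‖φ' x - φ' y‖ ^ 2 ≤ ℓ * ⟪φ' x - φ' y, x - y⟫ := by
  have hxy := hφ.add_inner_add_sq_norm_sub_le hℓ hub (hgrad x) y
  have hyx := hφ.add_inner_add_sq_norm_sub_le hℓ hub (hgrad y) x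
  rw [norm_sub_rev] at hxy
  have : ⟪φ' x - φ' y, x - y⟫ = -⟪φ' x, y - x⟫ - ⟪φ' y, x - y⟫ := by
    rw [inner_sub_left, ← neg_sub x y, inner_neg_right]; ring
  rw [this, ← div_le_iff₀' hℓ]
  linarith [show ‖φ' x - φ' y‖ ^ 2 / ℓ = 2 * (‖φ' x - φ' y‖ ^ 2 / (2 * ℓ)) by ring]

end Cocoercive

section StronglyConvex

variable {f : E → ℝ} {f' : E → E} {m L μ : ℝ}

lemma mul_sq_norm_sub_le_inner_gradient_sub (hf : ∀ z, HasGradientAt f (f' z) z)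
    (hsc : ConvexOn ℝ univ fun x => f x - m / 2 * ‖x‖ ^ 2) (x y : E) :
    m * ‖x - y‖ ^ 2 ≤ ⟪f' x - f' y, x - y⟫ := by
  have := hsc.inner_sub_nonneg_of_hasGradientAt ((hf x).sub_mul_sq_norm m)
    ((hf y).sub_mul_sq_norm m)
  rwa [sub_sub_sub_comm, ← smul_sub, inner_sub_left, real_inner_smul_left,
    real_inner_self_eq_norm_sq, sub_nonneg] at this

lemma norm_sub_smul_gradient_sub_le (hL : 0 < L) (hμ : μ = 1 / (2 * L))
    (hf : ∀ z, HasGradientAt f (f' z) z)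
    (hsc : ConvexOn ℝ univ fun x => f x - m / 2 * ‖x‖ ^ 2)
    (hLip : ∀ x y, ‖f' x - f' y‖ ≤ L * ‖x - y‖) (x y : E) :
    ‖(x - μ • f' x) - (y - μ • f' y)‖ ≤ (1 - μ * m) * ‖x - y‖ := by
  rcases eq_or_ne x y with rfl | hxy
  · simp
  have hmL : m ≤ L := by
    have hpos : 0 < ‖x - y‖ ^ 2 := by positivity [sub_ne_zero.2 hxy]
    have hupper : ⟪f' x - f' y, x - y⟫ ≤ L * ‖x - y‖ ^ 2 :=
      calc _ ≤ ‖f' x - f' y‖ * ‖x - y‖ := real_inner_le_norm _ _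
        _ ≤ L * ‖x - y‖ * ‖x - y‖ := by gcongr; exact hLip x y
        _ = L * ‖x - y‖ ^ 2 := by ring
    exact le_of_mul_le_mul_right
      ((mul_sq_norm_sub_le_inner_gradient_sub hf hsc x y).trans hupper) hpos
  -- `h = f - (m/2)‖·‖²` has an `ℓ`-quadratic upper bound since `L - m ≤ ℓ`, and `μ ℓ = 1 - μ m`
  set ℓ := 2 * L - m
  have hℓ : 0 < ℓ := by linarith
  have hμ0 : 0 < μ := by rw [hμ]; positivity
  have hμℓ : μ * ℓ = 1 - μ * m := by rw [hμ]; field_simp; ring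
  set h' : E → E := fun z => f' z - m • z
  have hub : ∀ a b, f b - m / 2 * ‖b‖ ^ 2 ≤
      f a - m / 2 * ‖a‖ ^ 2 + ⟪h' a, b - a⟫ + ℓ / 2 * ‖b - a‖ ^ 2 := by
    intro a b
    have hdesc := le_add_inner_add_sq_of_lipschitz_gradient hf hLip a b
    have hb : ‖b‖ ^ 2 = ‖a‖ ^ 2 + 2 * ⟪a, b - a⟫ + ‖b - a‖ ^ 2 := by
      rw [← norm_add_sq_real, add_sub_cancel]
    simp only [h', inner_sub_left, real_inner_smul_left]
    nlinarith [sq_nonneg ‖b - a‖]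
  have hcoco := hsc.sq_norm_sub_le_inner hℓ (fun z => (hf z).sub_mul_sq_norm m) hub x y
  have hstep : (x - μ • f' x) - (y - μ • f' y) = μ • (ℓ • (x - y) - (h' x - h' y)) := by
    rw [smul_sub, smul_smul, hμℓ]; simp only [h']; module
  rw [hstep, norm_smul, Real.norm_of_nonneg hμ0.le, ← hμℓ, mul_assoc]
  exact mul_le_mul_of_nonneg_left (norm_smul_sub_le_of_sq_norm_le_inner hℓ.le hcoco) hμ0.le

end StronglyConvex

lemma IsProxPoint.eq_of_isMinOn_add {f g : E → ℝ} {f' : E → E} {L μ : ℝ}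
    (hf : ∀ z, HasGradientAt f (f' z) z) (hLip : ∀ x y, ‖f' x - f' y‖ ≤ L * ‖x - y‖)
    (hg : ConvexOn ℝ univ g) (hμ : 0 < μ) (hμL : μ * L < 2) {xs p : E}
    (hxs : IsMinOn (fun z => f z + g z) univ xs) (hp : IsProxPoint g μ (xs - μ • f' xs) p) :
    p = xs := by
  have hsub := hp.inner_sub_le hg hμ xs
  have hmin : f xs + g xs ≤ f p + g p := hxs (mem_univ p)
  have hdesc := le_add_inner_add_sq_of_lipschitz_gradient hf hLip xs p
  have hinner : ⟪xs - μ • f' xs - p, xs - p⟫ = ‖p - xs‖ ^ 2 + μ * ⟪f' xs, p - xs⟫ := by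
    rw [sub_right_comm, inner_sub_left, real_inner_smul_left, real_inner_self_eq_norm_sq,
      norm_sub_rev, ← neg_sub p xs, inner_neg_right]
    ring
  have hsq : ‖p - xs‖ ^ 2 ≤ 0 := by nlinarith
  simpa [sub_eq_zero] using le_antisymm hsq (sq_nonneg _)

lemma mul_sq_norm_sub_le_inner_sub_prox {f g : E → ℝ} {f' : E → E} {m L μ : ℝ} (hL : 0 < L)
    (hμ : μ = 1 / (2 * L)) (hf : ∀ z, HasGradientAt f (f' z) z)
    (hsc : ConvexOn ℝ univ fun x => f x - m / 2 * ‖x‖ ^ 2)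
    (hLip : ∀ x y, ‖f' x - f' y‖ ≤ L * ‖x - y‖) (hg : ConvexOn ℝ univ g) {prox : E → E}
    (hprox : ∀ v, IsProxPoint g μ v (prox v)) {xs : E} (hfix : prox (xs - μ • f' xs) = xs)
    (z : E) : m * ‖z - xs‖ ^ 2 ≤ μ⁻¹ * ⟪z - prox (z - μ • f' z), z - xs⟫ := by
  have hμ0 : 0 < μ := by rw [hμ]; positivity
  have hstep : ‖prox (z - μ • f' z) - xs‖ ≤ (1 - μ * m) * ‖z - xs‖ :=
    calc _ = ‖prox (z - μ • f' z) - prox (xs - μ • f' xs)‖ := by rw [hfix]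
      _ ≤ ‖(z - μ • f' z) - (xs - μ • f' xs)‖ := (hprox _).norm_sub_le hg hμ0 (hprox _)
      _ ≤ _ := norm_sub_smul_gradient_sub_le hL hμ hf hsc hLip z xs
  have := sub_mul_sq_le_inner_sub_of_norm_sub_le hstep
  rw [sub_sub_cancel, mul_assoc] at this
  calc m * ‖z - xs‖ ^ 2 = μ⁻¹ * (μ * (m * ‖z - xs‖ ^ 2)) := by field_simp
    _ ≤ _ := by gcongr

theorem FB_flow_exponential_stability_general {n : ℕ}
    (f g F : EuclideanSpace ℝ (Fin n) → ℝ)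
    (m L μ α : ℝ)
    (hL : 0 < L)
    (hfC1 : ContDiff ℝ 1 f)
    (hfsc : ConvexOn ℝ univ (fun x => f x - m / 2 * ‖x‖ ^ 2))
    (hfLip : ∀ x y, ‖gradient f x - gradient f y‖ ≤ L * ‖x - y‖)
    (hgconv : ConvexOn ℝ univ g)
    (hF : ∀ x, F x = f x + g x)
    (hμ : μ = 1 / (2 * L)) (hα : 0 < α)
    (proxg : EuclideanSpace ℝ (Fin n) → EuclideanSpace ℝ (Fin n))
    (hproxg : ∀ v, IsMinOn (fun z => g z + ‖z - v‖ ^ 2 / (2 * μ)) univ (proxg v))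
    (G : EuclideanSpace ℝ (Fin n) → EuclideanSpace ℝ (Fin n))
    (hG : ∀ x, G x = μ⁻¹ • (x - proxg (x - μ • gradient f x))) :
    ∃ c > (0 : ℝ), ∀ x v : ℝ → EuclideanSpace ℝ (Fin n),
      (∀ t ∈ Ici (0 : ℝ), HasDerivWithinAt x (v t) (Ici 0) t) →
      ContinuousOn v (Ici 0) →
      (∀ t ∈ Ici (0 : ℝ), v t = -(α • G (x t))) →
      ∀ xs, IsMinOn F univ xs →
        ∀ t ∈ Ici (0 : ℝ),
          ‖x t - xs‖ ≤ c * Real.exp (-(α * m) * t) * ‖x 0 - xs‖ := by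
  obtain rfl : F = fun z => f z + g z := funext hF
  have hμ0 : 0 < μ := by rw [hμ]; positivity
  have hgrad : ∀ z, HasGradientAt f (gradient f z) z := fun z =>
    ((hfC1.differentiable one_ne_zero) z).hasGradientAt
  refine ⟨1, one_pos, fun x v hx _ hv xs hxs t ht => ?_⟩
  have hfix : proxg (xs - μ • gradient f xs) = xs :=
    IsProxPoint.eq_of_isMinOn_add hgrad hfLip hgconv hμ0 (by rw [hμ]; field_simp; norm_num)
      hxs (hproxg _)
  have hGmono : ∀ z, m * ‖z - xs‖ ^ 2 ≤ ⟪G z, z - xs⟫ := fun z => by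
    rw [hG, real_inner_smul_left]
    exact mul_sq_norm_sub_le_inner_sub_prox hL hμ hgrad hfsc hfLip hgconv hproxg hfix z
  rw [one_mul]
  refine norm_sub_le_exp_mul_of_inner_deriv_le hx (fun s hs => ?_) ht
  rw [hv s hs, inner_neg_left, real_inner_smul_left, neg_mul, neg_le_neg_iff, mul_assoc]
  exact mul_le_mul_of_nonneg_left (hGmono (x s)) hα.le

/-- Lemma 1, forward–backward case: global exponential
stability of the proximal gradient (forward–backward) flow with rate `αm` for
an `m`-strongly convex `f` with `L`-Lipschitz gradient and `μ = 1/(2L)`. -/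
theorem FB_flow_exponential_stability {n : ℕ}
    (f g F : EuclideanSpace ℝ (Fin n) → ℝ)
    (m L μ α : ℝ)
    (hm : 0 < m) (hL : 0 < L)
    (hfC1 : ContDiff ℝ 1 f)
    (hfsc : ConvexOn ℝ univ (fun x => f x - m / 2 * ‖x‖ ^ 2))
    (hfLip : ∀ x y, ‖gradient f x - gradient f y‖ ≤ L * ‖x - y‖)
    (hgconv : ConvexOn ℝ univ g) (hglsc : LowerSemicontinuous g)
    (hF : ∀ x, F x = f x + g x)
    (hμ : μ = 1 / (2 * L)) (hα : 0 < α)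
    (proxg : EuclideanSpace ℝ (Fin n) → EuclideanSpace ℝ (Fin n))
    (hproxg : ∀ v, IsMinOn (fun z => g z + ‖z - v‖ ^ 2 / (2 * μ)) univ (proxg v))
    (G : EuclideanSpace ℝ (Fin n) → EuclideanSpace ℝ (Fin n))
    (hG : ∀ x, G x = μ⁻¹ • (x - proxg (x - μ • gradient f x))) :
    ∃ c > (0 : ℝ), ∀ x v : ℝ → EuclideanSpace ℝ (Fin n),
      (∀ t ∈ Ici (0 : ℝ), HasDerivWithinAt x (v t) (Ici 0) t) →
      ContinuousOn v (Ici 0) →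
      (∀ t ∈ Ici (0 : ℝ), v t = -(α • G (x t))) →
      ∀ xs, IsMinOn F univ xs →
        ∀ t ∈ Ici (0 : ℝ),
          ‖x t - xs‖ ≤ c * Real.exp (-(α * m) * t) * ‖x 0 - xs‖ :=
  FB_flow_exponential_stability_general f g F m L μ α hL hfC1 hfsc hfLip hgconv hF hμ hα proxg
    hproxg G hG
end
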